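/- Let d be a positive integer and p a prime with p ∤ d. Then for every integer m with 0 < m ≤ d, p_△(m) = (p−1)·∑_{a=0}^{m−1} a/d + ∑_{a=1}^{m−1} a/d − ∑_{a=1}^{m−1} {pa/d} + #{1 ≤ a < m : d·{pa/d} ≥ m}. -/

import Mathlib

/-!
Write `σ a = p * a % d`, so that `p * a = d * ⌊p a / d⌋ + σ a`. For `a < d` this gives
`⌈(p - 1) a / d⌉ = ⌊p a / d⌋ + [a < σ a]` and `δ_∈(a) = [a = σ i for some 1 ≤ i < a]`, while the
first three terms of the right-hand side add up to `∑ ⌊p a / d⌋`. As `p ∤ d`, `σ` is injective on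
`[0, d)`, so it maps `{a < m : a < σ a < m}` bijectively onto `{b < m : b = σ i, 1 ≤ i < b}`; hence
the two indicator sums differ exactly by `#{a < m : σ a ≥ m}`.
-/

open scoped Classical

/-- `{x}' := {x}` if the fractional part is nonzero, else `1`. -/
noncomputable def fract' (x : ℚ) : ℚ := if Int.fract x = 0 then 1 else Int.fract x

/-- `δ_∈(a) = 1` iff there is `i ≥ 1` with `p·i ≡ a (mod d)` and `i/d < {a/d}`. -/
noncomputable def deltaIn (d p a : ℕ) : ℤ :=
  if ∃ i : ℕ, 1 ≤ i ∧ p * i ≡ a [MOD d] ∧ (i : ℚ) / d < Int.fract ((a : ℚ) / d) then 1 else 0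

/-- `δ_<(a) = 1` iff `{a/d}' < {pa/d}'`. -/
noncomputable def deltaLt (d p a : ℕ) : ℤ :=
  if fract' ((a : ℚ) / d) < fract' (((p : ℚ) * a) / d) then 1 else 0

/-- `ϖ(a) = ⌈(p−1)a/d⌉ − δ_∈(a)`. -/
noncomputable def varpi (d p a : ℕ) : ℤ :=
  ⌈(((p : ℚ) - 1) * a) / d⌉ - deltaIn d p a

/-- The arithmetic polygon of `△ = [0, d]`: `p_△(m) = ∑_{a=0}^{m−1} ϖ(a)`. -/
noncomputable def pTri (d p m : ℕ) : ℤ := ∑ a ∈ Finset.range m, varpi d p a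

open Finset

theorem Int.ceil_natCast_sub_div_of_lt {K : Type*} [Field K] [LinearOrder K]
    [IsStrictOrderedRing K] [FloorRing K] {n a d : ℕ} (had : a < d) :
    ⌈((n : K) - a) / d⌉ = (n / d : ℕ) + if a < n % d then 1 else 0 := by
  have hd : (0 : K) < d := by exact_mod_cast (Nat.zero_le a).trans_lt had
  have hsplit : ((n : K) - a) / d = ((n % d : ℕ) - a) / d + (n / d : ℕ) := by
    have hn : (n : K) = d * (n / d : ℕ) + (n % d : ℕ) := by
      exact_mod_cast (Nat.div_add_mod n d).symm
    rw [hn]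
    field_simp
    ring
  rw [hsplit, Int.ceil_add_natCast, add_comm]
  congr 1
  have hr : ((n % d : ℕ) : K) < d := by exact_mod_cast Nat.mod_lt n (by omega)
  have ha : (a : K) < d := by exact_mod_cast had
  rw [Int.ceil_eq_iff, lt_div_iff₀ hd, div_le_iff₀ hd]
  split_ifs with h
  · have : (a : K) < (n % d : ℕ) := by exact_mod_cast h
    push_cast
    constructor <;> linarith
  · have : ((n % d : ℕ) : K) ≤ a := by exact_mod_cast not_lt.1 h
    push_cast
    constructor <;> linarith [(Nat.cast_nonneg (n % d) : (0 : K) ≤ _)]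

theorem Finset.sum_range_eq_sum_Ico_one {M : Type*} [AddCommMonoid M] {f : ℕ → M} (h : f 0 = 0)
    (m : ℕ) : ∑ a ∈ range m, f a = ∑ a ∈ Ico 1 m, f a := by
  refine (sum_subset (fun a ↦ by simp only [mem_Ico, mem_range]; omega) fun a ha ha' ↦ ?_).symm
  obtain rfl : a = 0 := by simp only [mem_Ico, mem_range] at ha ha'; omega
  exact h

theorem Finset.card_filter_lt_apply_Ico {σ : ℕ → ℕ} {k m : ℕ} (hσ : Set.InjOn σ (Ico k m)) :
    #{a ∈ Ico k m | a < σ a} =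
      #{b ∈ Ico k m | ∃ i, k ≤ i ∧ σ i = b ∧ i < b} + #{a ∈ Ico k m | m ≤ σ a} := by
  have hsub : {a ∈ Ico k m | m ≤ σ a} ⊆ {a ∈ Ico k m | a < σ a} := by
    intro a
    simp only [mem_filter, mem_Ico]
    omega
  rw [← card_sdiff_add_card_eq_card hsub]
  congr 1
  -- `σ` maps the `a` with `a < σ a < m` onto the `b` that are hit from below
  refine card_bij (fun a _ ↦ σ a) (fun a ha ↦ ?_) (fun a ha b hb h ↦ ?_) fun b hb ↦ ?_
  · simp only [mem_sdiff, mem_filter, mem_Ico] at ha ⊢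
    exact ⟨by omega, a, ha.1.1.1, rfl, ha.1.2⟩
  · simp only [mem_sdiff, mem_filter] at ha hb
    exact hσ ha.1.1 hb.1.1 h
  · simp only [mem_filter, mem_Ico] at hb
    obtain ⟨⟨hkb, hbm⟩, i, hki, rfl, hib⟩ := hb
    exact ⟨i, by simp only [mem_sdiff, mem_filter, mem_Ico]; omega, rfl⟩

theorem Nat.injOn_mul_mod {p d : ℕ} (hcop : p.Coprime d) :
    Set.InjOn (fun a ↦ p * a % d) (Set.Iio d) := fun a ha b hb h ↦ by
  simpa [Nat.ModEq, Nat.mod_eq_of_lt ha, Nat.mod_eq_of_lt hb] using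
    Nat.ModEq.cancel_left_of_coprime hcop.symm h

section ArithmeticPolygon

variable {d p : ℕ}

theorem deltaIn_eq_ite {a : ℕ} (had : a < d) :
    deltaIn d p a = if ∃ i, 1 ≤ i ∧ p * i % d = a ∧ i < a then 1 else 0 := by
  have hd : (0 : ℚ) < d := by exact_mod_cast (Nat.zero_le a).trans_lt had
  simp only [deltaIn, Nat.ModEq, Nat.mod_eq_of_lt had, Int.fract_div_natCast_eq_div_natCast_mod,
    div_lt_div_iff_of_pos_right hd, Nat.cast_lt]

theorem varpi_eq {a : ℕ} (had : a < d) :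
    varpi d p a = (p * a / d : ℕ) + (if a < p * a % d then 1 else 0) -
      if ∃ i, 1 ≤ i ∧ p * i % d = a ∧ i < a then 1 else 0 := by
  rw [varpi, deltaIn_eq_ite had, ← Int.ceil_natCast_sub_div_of_lt (K := ℚ) had, Nat.cast_mul, sub_one_mul]

theorem varpi_zero : varpi d p 0 = 0 := by
  rw [varpi, deltaIn, if_neg]
  · simp
  · rintro ⟨i, -, -, hi⟩
    rw [Nat.cast_zero, zero_div, Int.fract_zero] at hi
    exact hi.not_ge (by positivity)

theorem pTri_eq {m : ℕ} (hcop : p.Coprime d) (hm : m ≤ d) :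
    pTri d p m = ∑ a ∈ Ico 1 m, (p * a / d : ℕ) + #{a ∈ Ico 1 m | m ≤ p * a % d} := by
  have hinj : Set.InjOn (fun a ↦ p * a % d) (Ico 1 m) :=
    (Nat.injOn_mul_mod hcop).mono fun a ha ↦ (mem_Ico.1 ha).2.trans_le hm
  rw [pTri, sum_range_eq_sum_Ico_one varpi_zero,
    sum_congr rfl fun a ha ↦ varpi_eq ((mem_Ico.1 ha).2.trans_le hm), sum_sub_distrib,
    sum_add_distrib, sum_boole, sum_boole, card_filter_lt_apply_Ico hinj]
  push_cast
  ring

theorem sum_div_sub_sum_fract_eq (m : ℕ) :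
    ((p : ℚ) - 1) * ∑ a ∈ range m, (a : ℚ) / d + ∑ a ∈ Ico 1 m, (a : ℚ) / d
      - ∑ a ∈ Ico 1 m, Int.fract ((p : ℚ) * a / d) = ∑ a ∈ Ico 1 m, ((p * a / d : ℕ) : ℚ) := by
  rw [sum_range_eq_sum_Ico_one (f := fun a : ℕ ↦ (a : ℚ) / d) (by simp), mul_sum,
    ← sum_add_distrib, ← sum_sub_distrib]
  refine sum_congr rfl fun a _ ↦ ?_
  have hfloor : (p : ℚ) * a / d - Int.fract ((p : ℚ) * a / d) = (p * a / d : ℕ) := by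
    rw [Int.self_sub_fract, ← Nat.cast_mul, Rat.floor_natCast_div_natCast]
    norm_cast
  rw [← hfloor]
  ring

theorem card_filter_natCast_le_mul_fract (hd : 0 < d) (m : ℕ) (s : Finset ℕ) :
    #{x ∈ (s : Finset ℚ) | (m : ℚ) ≤ d * Int.fract ((p : ℚ) * x / d)} =
      #{a ∈ s | m ≤ p * a % d} := by
  have himage : (s : Finset ℚ) = s.image Nat.cast := by
    rw [bind_pure_comp, Finset.fmap_def]
    congr
    exact Subsingleton.elim _ _
  rw [himage, filter_image, card_image_of_injective _ Nat.cast_injective]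
  congr 1
  refine filter_congr fun a _ ↦ ?_
  rw [← Nat.cast_mul, Int.fract_div_natCast_eq_div_natCast_mod,
    mul_div_cancel₀ _ (by positivity), Nat.cast_le]

end ArithmeticPolygon

theorem stmt6_general (d p : ℕ) (hd : 0 < d) (hp : p.Prime) (hpd : ¬ p ∣ d)
    (m : ℕ) (hm2 : m ≤ d) :
    (pTri d p m : ℚ) =
      ((p : ℚ) - 1) * ∑ a ∈ Finset.range m, (a : ℚ) / d
      + ∑ a ∈ Finset.Icc 1 (m - 1), (a : ℚ) / d
      - ∑ a ∈ Finset.Icc 1 (m - 1), Int.fract (((p : ℚ) * a) / d)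
      + (((Finset.Icc 1 (m - 1)).filter
          (fun a => (m : ℚ) ≤ d * Int.fract (((p : ℚ) * a) / d))).card : ℚ) := by
  have hIcc : Icc 1 (m - 1) = Ico 1 m := by
    ext a
    simp only [mem_Icc, mem_Ico]
    omega
  rw [card_filter_natCast_le_mul_fract hd, hIcc, sum_div_sub_sum_fract_eq,
    pTri_eq ((Nat.Prime.coprime_iff_not_dvd hp).2 hpd) hm2]
  push_cast
  rfl

theorem stmt6 (d p : ℕ) (hd : 0 < d) (hp : p.Prime) (hpd : ¬ p ∣ d)
    (m : ℕ) (hm1 : 0 < m) (hm2 : m ≤ d) :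
    (pTri d p m : ℚ) =
      ((p : ℚ) - 1) * ∑ a ∈ Finset.range m, (a : ℚ) / d
      + ∑ a ∈ Finset.Icc 1 (m - 1), (a : ℚ) / d
      - ∑ a ∈ Finset.Icc 1 (m - 1), Int.fract (((p : ℚ) * a) / d)
      + (((Finset.Icc 1 (m - 1)).filter
          (fun a => (m : ℚ) ≤ d * Int.fract (((p : ℚ) * a) / d))).card : ℚ) :=
  stmt6_general d p hd hp hpd m hm2
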